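/- Let E be a real inner product space, let d_P denote the Poincaré distance, let exp₀ denote the Poincaré exponential map at the origin, and let κ(R) = sinh(R)/R. For every R > 0 and all u, v ∈ E with ‖u‖ ≤ R and ‖v‖ ≤ R, one has ‖u − v‖ ≤ d_P(exp₀(u), exp₀(v)) ≤ κ(R)·‖u − v‖. -/

import Mathlib

open Real RealInnerProductSpace

/-- Inverse hyperbolic cosine: `_root_.arcosh z = log (z + √(z² − 1))` for `z ≥ 1`. -/
noncomputable def arcosh (z : ℝ) : ℝ := Real.log (z + Real.sqrt (z ^ 2 - 1))

/-- The Poincaré exponential map at the origin: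
`exp₀ u = tanh(‖u‖/2) · u/‖u‖` (and `exp₀ 0 = 0`). -/
noncomputable def poincareExp {E : Type*} [NormedAddCommGroup E] [InnerProductSpace ℝ E]
    (u : E) : E :=
  Real.tanh (‖u‖ / 2) • ‖u‖⁻¹ • u

/-- The Poincaré distance on the open unit ball:
`d_P(x,y) = _root_.arcosh (1 + 2‖x−y‖² / ((1−‖x‖²)(1−‖y‖²)))`. -/
noncomputable def poincareDist {E : Type*} [NormedAddCommGroup E] [InnerProductSpace ℝ E]
    (x y : E) : ℝ :=
  _root_.arcosh (1 + 2 * ‖x - y‖ ^ 2 / ((1 - ‖x‖ ^ 2) * (1 - ‖y‖ ^ 2)))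


lemma arcosh_cosh {t : ℝ} (ht : 0 ≤ t) : _root_.arcosh (Real.cosh t) = t := by
  unfold _root_.arcosh
  have h1 : Real.cosh t ^ 2 - 1 = Real.sinh t ^ 2 := by rw [Real.cosh_sq]; ring
  rw [h1, Real.sqrt_sq (Real.sinh_nonneg_iff.2 ht), Real.cosh_add_sinh, Real.log_exp]

lemma arcosh_le_arcosh {y z : ℝ} (hy : 1 ≤ y) (h : y ≤ z) : _root_.arcosh y ≤ _root_.arcosh z := by
  unfold _root_.arcosh
  apply Real.log_le_log (by positivity)
  have : Real.sqrt (y^2-1) ≤ Real.sqrt (z^2-1) := by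
    apply Real.sqrt_le_sqrt; nlinarith
  linarith


lemma sinh_le_mul_cosh {y : ℝ} (hy : 0 ≤ y) : Real.sinh y ≤ y * Real.cosh y := by
  have key : MonotoneOn (fun y : ℝ => y * Real.cosh y - Real.sinh y) (Set.Ici 0) := by
    apply monotoneOn_of_deriv_nonneg (convex_Ici 0)
    · exact ((continuous_id.mul Real.continuous_cosh).sub Real.continuous_sinh).continuousOn
    · intro x _
      exact (((hasDerivAt_id x).mul (Real.hasDerivAt_cosh x)).sub
        (Real.hasDerivAt_sinh x)).differentiableAt.differentiableWithinAt
    · intro x hx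
      rw [interior_Ici, Set.mem_Ioi] at hx
      have hd := (((hasDerivAt_id x).mul (Real.hasDerivAt_cosh x)).sub
          (Real.hasDerivAt_sinh x)).deriv
      simp only [id] at hd
      rw [show (fun y : ℝ => y * Real.cosh y - Real.sinh y) = id * Real.cosh - Real.sinh from rfl, hd]
      have := mul_nonneg hx.le (Real.sinh_nonneg_iff.2 hx.le)
      linarith
  have := key (Set.self_mem_Ici) (Set.mem_Ici.2 hy) hy
  simp at this
  linarith

lemma convexOn_cosh_sqrt : ConvexOn ℝ (Set.Ici 0) (fun x : ℝ => Real.cosh (Real.sqrt x)) := by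
  apply convexOn_of_hasDerivWithinAt2_nonneg (convex_Ici 0)
    (f' := fun x => Real.sinh (Real.sqrt x) / (2 * Real.sqrt x))
    (f'' := fun x => Real.cosh (Real.sqrt x) / (4 * x) -
      Real.sinh (Real.sqrt x) / (4 * x * Real.sqrt x))
  · exact (Real.continuous_cosh.comp continuous_sqrt).continuousOn
  all_goals intro x hx; rw [interior_Ici, Set.mem_Ioi] at hx
  · have hs : 0 < Real.sqrt x := Real.sqrt_pos.2 hx
    have h1 : HasDerivAt (fun x : ℝ => Real.cosh (Real.sqrt x))
        (Real.sinh (Real.sqrt x) * (1 / (2 * Real.sqrt x))) x :=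
      (Real.hasDerivAt_sqrt hx.ne').cosh
    have h2 := h1.hasDerivWithinAt (s := interior (Set.Ici (0:ℝ)))
    refine h2.congr_deriv ?_; field_simp
  · obtain ⟨y, hy0, rfl⟩ : ∃ y : ℝ, 0 < y ∧ x = y ^ 2 :=
      ⟨Real.sqrt x, Real.sqrt_pos.2 hx, (Real.sq_sqrt hx.le).symm⟩
    have hsq : Real.sqrt (y ^ 2) = y := Real.sqrt_sq hy0.le
    have h1 : HasDerivAt (fun x : ℝ => Real.sinh (Real.sqrt x) / (2 * Real.sqrt x))
        ((Real.cosh (Real.sqrt (y^2)) * (1 / (2 * Real.sqrt (y^2))) * (2 * Real.sqrt (y^2)) -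
          Real.sinh (Real.sqrt (y^2)) * (2 * (1 / (2 * Real.sqrt (y^2))))) / (2 * Real.sqrt (y^2)) ^ 2) (y^2) := by
      apply HasDerivAt.div
      · exact (Real.hasDerivAt_sqrt (by positivity)).sinh
      · exact (Real.hasDerivAt_sqrt (by positivity)).const_mul 2
      · rw [hsq]; positivity
    have h2 := h1.hasDerivWithinAt (s := interior (Set.Ici (0:ℝ)))
    refine h2.congr_deriv ?_
    rw [hsq]
    field_simp
    ring
  · obtain ⟨y, hy0, rfl⟩ : ∃ y : ℝ, 0 < y ∧ x = y ^ 2 :=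
      ⟨Real.sqrt x, Real.sqrt_pos.2 hx, (Real.sq_sqrt hx.le).symm⟩
    have hsq : Real.sqrt (y ^ 2) = y := Real.sqrt_sq hy0.le
    rw [hsq, sub_nonneg, div_le_div_iff₀ (by positivity) (by positivity)]
    have := sinh_le_mul_cosh hy0.le
    nlinarith [Real.cosh_pos y]


-- product-to-difference: cosh β - cosh α = 2 sinh((β+α)/2) sinh((β-α)/2)
lemma cosh_sub_cosh_ge {α β : ℝ} (h0 : 0 ≤ α) (h : α ≤ β) :
    (β ^ 2 - α ^ 2) / 2 ≤ Real.cosh β - Real.cosh α := by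
  have key : Real.cosh β - Real.cosh α =
      2 * Real.sinh ((β + α) / 2) * Real.sinh ((β - α) / 2) := by
    have h1 := Real.cosh_add ((β + α) / 2) ((β - α) / 2)
    have h2 := Real.cosh_sub ((β + α) / 2) ((β - α) / 2)
    have e1 : (β + α) / 2 + (β - α) / 2 = β := by ring
    have e2 : (β + α) / 2 - (β - α) / 2 = α := by ring
    rw [e1] at h1; rw [e2] at h2; linarith
  have p1 : (β + α) / 2 ≤ Real.sinh ((β + α) / 2) := Real.self_le_sinh_iff.2 (by linarith)
  have p2 : (β - α) / 2 ≤ Real.sinh ((β - α) / 2) := Real.self_le_sinh_iff.2 (by linarith)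
  have q1 : (0:ℝ) ≤ (β + α) / 2 := by linarith
  have q2 : (0:ℝ) ≤ (β - α) / 2 := by linarith
  nlinarith

lemma sinh_div_le {x R : ℝ} (hx : 0 < x) (hR : x ≤ R) : Real.sinh x / x ≤ Real.sinh R / R := by
  have hR0 : 0 < R := lt_of_lt_of_le hx hR
  have hconv : ConvexOn ℝ (Set.Ici 0) Real.sinh := by
    apply convexOn_of_deriv2_nonneg (convex_Ici 0) Real.continuous_sinh.continuousOn
    · exact Real.differentiable_sinh.differentiableOn
    · rw [Real.deriv_sinh]; exact Real.differentiable_cosh.differentiableOn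
    · intro y hy
      rw [interior_Ici, Set.mem_Ioi] at hy
      have : deriv^[2] Real.sinh y = Real.sinh y := by
        simp [Function.iterate_succ, Real.deriv_sinh, Real.deriv_cosh]
      rw [this]
      exact (Real.sinh_nonneg_iff.2 hy.le)
  have h1 : (0:ℝ) ≤ 1 - x / R := by
    rw [sub_nonneg]; exact div_le_one_of_le₀ hR hR0.le
  have h2 : (0:ℝ) ≤ x / R := by positivity
  have hab : (1 - x / R) + x / R = 1 := by ring
  have := hconv.2 (Set.mem_Ici.2 (le_refl (0:ℝ))) (Set.mem_Ici.2 hR0.le) h1 h2 hab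
  simp only [smul_eq_mul, mul_zero, zero_add, Real.sinh_zero] at this
  have hx' : x / R * R = x := by field_simp
  rw [hx'] at this
  rw [div_le_div_iff₀ hx hR0]
  calc Real.sinh x * R ≤ (x / R * Real.sinh R) * R := by nlinarith
    _ = Real.sinh R * x := by field_simp

lemma one_le_kappa {R : ℝ} (hR : 0 < R) : 1 ≤ Real.sinh R / R :=
  (one_le_div hR).2 (Real.self_le_sinh_iff.2 hR.le)



lemma lower_scalar {a b ι D : ℝ} (ha : 0 < a) (hb : 0 < b) (hι1 : -(a*b) ≤ ι) (hι2 : ι ≤ a*b)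
    (hD0 : 0 ≤ D) (hD : D^2 = a^2 + b^2 - 2*ι) :
    Real.cosh D ≤ Real.cosh a * Real.cosh b - (Real.sinh a / a) * (Real.sinh b / b) * ι := by
  set q : ℝ := (a - b)^2 with hq
  set s : ℝ := 2*(a*b - ι) with hs
  set S : ℝ := 4*(a*b) with hS
  have hS0 : 0 < S := by positivity
  have hs0 : 0 ≤ s := by simp only [hs]; nlinarith
  have hsS : s ≤ S := by simp only [hs, hS]; nlinarith
  have h1 : (0:ℝ) ≤ 1 - s/S := by rw [sub_nonneg]; exact div_le_one_of_le₀ hsS hS0.le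
  have h2 : (0:ℝ) ≤ s/S := by positivity
  have hab : (1 - s/S) + s/S = 1 := by ring
  have happ := convexOn_cosh_sqrt.2 (Set.mem_Ici.2 (by positivity : (0:ℝ) ≤ q))
    (Set.mem_Ici.2 (by positivity : (0:ℝ) ≤ q + S)) h1 h2 hab
  simp only [smul_eq_mul] at happ
  have e1 : (1 - s/S) * q + s/S * (q + S) = D^2 := by
    field_simp; nlinarith [hD]
  have e2 : Real.sqrt (D^2) = D := Real.sqrt_sq hD0
  have e3 : Real.sqrt q = |a - b| := by rw [hq, Real.sqrt_sq_eq_abs]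
  have e4 : Real.sqrt (q + S) = a + b := by
    have : q + S = (a+b)^2 := by rw [hq, hS]; ring
    rw [this, Real.sqrt_sq (by positivity)]
  rw [e1, e2, e3, e4] at happ
  rw [Real.cosh_abs] at happ
  refine happ.trans (le_of_eq ?_)
  rw [Real.cosh_sub, Real.cosh_add, hs, hS]
  field_simp
  ring

lemma upper_scalar {R a b ι D : ℝ} (hR : 0 < R) (ha : 0 < a) (haR : a ≤ R) (hb : 0 < b)
    (hbR : b ≤ R) (hι2 : ι ≤ a*b) (hD0 : 0 ≤ D) (hD : D^2 = a^2 + b^2 - 2*ι) :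
    Real.cosh a * Real.cosh b - (Real.sinh a / a) * (Real.sinh b / b) * ι ≤
      Real.cosh ((Real.sinh R / R) * D) := by
  set κ : ℝ := Real.sinh R / R with hκdef
  have hκ : 1 ≤ κ := one_le_kappa hR
  have hκ0 : 0 < κ := lt_of_lt_of_le one_pos hκ
  -- rewrite z
  have hz : Real.cosh a * Real.cosh b - (Real.sinh a / a) * (Real.sinh b / b) * ι
      = Real.cosh (a - b) + (Real.sinh a / a) * (Real.sinh b / b) * (a*b - ι) := by
    rw [Real.cosh_sub]; field_simp; ring
  have hsa : 0 < Real.sinh a / a := div_pos (Real.sinh_pos_iff.2 ha) ha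
  have hsb : 0 < Real.sinh b / b := div_pos (Real.sinh_pos_iff.2 hb) hb
  have hm : (Real.sinh a / a) * (Real.sinh b / b) ≤ κ^2 := by
    have h1 := sinh_div_le ha haR
    have h2 := sinh_div_le hb hbR
    calc (Real.sinh a / a) * (Real.sinh b / b) ≤ κ * κ := by
          exact mul_le_mul h1 h2 hsb.le hκ0.le
      _ = κ^2 := (sq κ).symm
  have habι : 0 ≤ a*b - ι := by linarith
  have step1 : (Real.sinh a / a) * (Real.sinh b / b) * (a*b - ι) ≤ κ^2 * (a*b - ι) :=
    mul_le_mul_of_nonneg_right hm habι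
  -- cosh(a-b) ≤ cosh(κ*|a-b|)
  have habD : |a - b| ≤ D := by
    have : (a-b)^2 ≤ D^2 := by nlinarith
    calc |a - b| = Real.sqrt ((a-b)^2) := (Real.sqrt_sq_eq_abs _).symm
      _ ≤ Real.sqrt (D^2) := Real.sqrt_le_sqrt this
      _ = D := Real.sqrt_sq hD0
  have hα0 : 0 ≤ κ * |a - b| := by positivity
  have hαβ : κ * |a - b| ≤ κ * D := mul_le_mul_of_nonneg_left habD hκ0.le
  have step2 : Real.cosh (a - b) ≤ Real.cosh (κ * |a - b|) := by
    rw [Real.cosh_le_cosh]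
    rw [abs_of_nonneg hα0]
    nlinarith [abs_nonneg (a - b)]
  have step3 := cosh_sub_cosh_ge hα0 hαβ
  have hsq : (κ * D)^2 - (κ * |a-b|)^2 = κ^2 * (2*(a*b - ι)) := by
    have h1 : |a-b|^2 = (a-b)^2 := sq_abs _
    rw [mul_pow, mul_pow, h1]; nlinarith [hD]
  rw [hz]
  have : κ^2 * (a*b - ι) ≤ Real.cosh (κ * D) - Real.cosh (κ * |a-b|) := by
    calc κ^2 * (a*b - ι) = ((κ*D)^2 - (κ*|a-b|)^2)/2 := by rw [hsq]; ring
      _ ≤ _ := step3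
  linarith

lemma tanh_half_nonneg {x : ℝ} (hx : 0 ≤ x) : 0 ≤ Real.tanh (x / 2) := by
  rw [Real.tanh_eq_sinh_div_cosh]
  exact div_nonneg (Real.sinh_nonneg_iff.2 (by linarith)) (Real.cosh_pos _).le

lemma norm_poincareExp {E : Type*} [NormedAddCommGroup E] [InnerProductSpace ℝ E] (u : E) :
    ‖poincareExp u‖ = Real.tanh (‖u‖ / 2) := by
  by_cases hu : u = 0
  · simp [poincareExp, hu]
  · have ha : (0:ℝ) < ‖u‖ := norm_pos_iff.2 hu
    rw [poincareExp, norm_smul, norm_smul, norm_inv, norm_norm, Real.norm_eq_abs,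
      abs_of_nonneg (tanh_half_nonneg (norm_nonneg u)), inv_mul_cancel₀ ha.ne', mul_one]

-- half-angle pack
lemma cosh_norm_eq (a : ℝ) : Real.cosh a = Real.cosh (a/2)^2 + Real.sinh (a/2)^2 := by
  have := Real.cosh_two_mul (a/2)
  have e : 2 * (a/2) = a := by ring
  rw [e] at this; exact this

lemma sinh_norm_eq (a : ℝ) : Real.sinh a = 2 * Real.sinh (a/2) * Real.cosh (a/2) := by
  have := Real.sinh_two_mul (a/2)
  have e : 2 * (a/2) = a := by ring
  rw [e] at this; exact this

lemma poincare_dist_exp {E : Type*} [NormedAddCommGroup E] [InnerProductSpace ℝ E] (u v : E) :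
    poincareDist (poincareExp u) (poincareExp v) =
      _root_.arcosh (Real.cosh ‖u‖ * Real.cosh ‖v‖ -
        (Real.sinh ‖u‖ / ‖u‖) * (Real.sinh ‖v‖ / ‖v‖) * ⟪u, v⟫) := by
  rw [poincareDist]
  congr 1
  rw [norm_poincareExp, norm_poincareExp]
  set a : ℝ := ‖u‖ with hadef
  set b : ℝ := ‖v‖ with hbdef
  set sa : ℝ := Real.sinh (a/2)
  set ca : ℝ := Real.cosh (a/2)
  set sb : ℝ := Real.sinh (b/2)
  set cb : ℝ := Real.cosh (b/2)
  have hca2 : ca^2 = sa^2 + 1 := Real.cosh_sq _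
  have hcb2 : cb^2 = sb^2 + 1 := Real.cosh_sq _
  have hca0 : 0 < ca := Real.cosh_pos _
  have hcb0 : 0 < cb := Real.cosh_pos _
  have hta : Real.tanh (a/2) = sa/ca := Real.tanh_eq_sinh_div_cosh _
  have htb : Real.tanh (b/2) = sb/cb := Real.tanh_eq_sinh_div_cosh _
  have hch_a : Real.cosh a = ca^2 + sa^2 := cosh_norm_eq a
  have hch_b : Real.cosh b = cb^2 + sb^2 := cosh_norm_eq b
  have hsh_a : Real.sinh a = 2 * sa * ca := sinh_norm_eq a
  have hsh_b : Real.sinh b = 2 * sb * cb := sinh_norm_eq b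
  have h1ta : 1 - (sa/ca)^2 = 1/ca^2 := by field_simp; linarith [hca2]
  have h1tb : 1 - (sb/cb)^2 = 1/cb^2 := by field_simp; linarith [hcb2]
  by_cases hu : u = 0
  · have ha0 : a = 0 := by rw [hadef, hu, norm_zero]
    have hι : ⟪u, v⟫ = 0 := by rw [hu, inner_zero_left]
    have hx0 : poincareExp u = 0 := by rw [hu]; simp [poincareExp]
    rw [hx0, hι, zero_sub, norm_neg, norm_poincareExp, ← hbdef, ha0]
    simp only [mul_zero, sub_zero]
    norm_num [Real.tanh_zero, Real.cosh_zero]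
    rw [htb, h1tb, hch_b]
    field_simp
    linear_combination (2 * sb^2 + 1 - cb^2 - sb^2 * cb^2 - (cb^2+sb^2) + (sb^2+2)*(cb^2-1)) * hcb2
  by_cases hv : v = 0
  · have hb0 : b = 0 := by rw [hbdef, hv, norm_zero]
    have hι : ⟪u, v⟫ = 0 := by rw [hv, inner_zero_right]
    have hy0 : poincareExp v = 0 := by rw [hv]; simp [poincareExp]
    rw [hy0, hι, sub_zero, norm_poincareExp, ← hadef, hb0]
    simp only [mul_zero, sub_zero]
    norm_num [Real.tanh_zero, Real.cosh_zero]
    rw [hta, h1ta, hch_a]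
    field_simp
    linear_combination (2 * sa^2 + 1 - ca^2 - sa^2 * ca^2 - (ca^2+sa^2) + (sa^2+2)*(ca^2-1)) * hca2
  · have ha : (0:ℝ) < a := norm_pos_iff.2 hu
    have hb : (0:ℝ) < b := norm_pos_iff.2 hv
    have hxy : ‖poincareExp u - poincareExp v‖^2 =
        (Real.tanh (a/2))^2 - 2 * (Real.tanh (a/2) * a⁻¹) * (Real.tanh (b/2) * b⁻¹) * ⟪u, v⟫
          + (Real.tanh (b/2))^2 := by
      rw [norm_sub_sq_real]
      rw [norm_poincareExp, norm_poincareExp]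
      congr 1
      congr 1
      rw [poincareExp, poincareExp]
      rw [smul_smul, smul_smul, real_inner_smul_left, real_inner_smul_right]
      ring
    rw [hxy, hta, htb]
    rw [h1ta, h1tb, hch_a, hch_b, hsh_a, hsh_b]
    field_simp
    linear_combination (a*b*(sb^2-cb^2)) * hca2 - (a*b) * hcb2


/-- Theorem 1 (tangent-space distortion under radius `R`), Poincaré model:
for `‖u‖, ‖v‖ ≤ R`,
`‖u − v‖ ≤ d_P(exp₀ u, exp₀ v) ≤ (sinh R / R) · ‖u − v‖`. -/
theorem poincare_tangent_distortion {E : Type*} [NormedAddCommGroup E]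
    [InnerProductSpace ℝ E] (R : ℝ) (hR : 0 < R) (u v : E)
    (hu : ‖u‖ ≤ R) (hv : ‖v‖ ≤ R) :
    ‖u - v‖ ≤ poincareDist (poincareExp u) (poincareExp v) ∧
      poincareDist (poincareExp u) (poincareExp v) ≤ (Real.sinh R / R) * ‖u - v‖ := by
  rw [poincare_dist_exp u v]
  have hκ : 1 ≤ Real.sinh R / R := one_le_kappa hR
  have hD0 : (0:ℝ) ≤ ‖u - v‖ := norm_nonneg _
  by_cases hu0 : u = 0
  · subst hu0
    simp only [inner_zero_left, mul_zero, sub_zero, norm_zero, Real.cosh_zero, one_mul,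
      zero_sub, norm_neg]
    rw [_root_.arcosh_cosh (norm_nonneg v)]
    refine ⟨le_rfl, ?_⟩
    nlinarith [norm_nonneg v]
  by_cases hv0 : v = 0
  · subst hv0
    simp only [inner_zero_right, mul_zero, sub_zero, norm_zero, Real.cosh_zero, mul_one]
    rw [_root_.arcosh_cosh (norm_nonneg u)]
    refine ⟨le_rfl, ?_⟩
    nlinarith [norm_nonneg u]
  · have ha : (0:ℝ) < ‖u‖ := norm_pos_iff.2 hu0
    have hb : (0:ℝ) < ‖v‖ := norm_pos_iff.2 hv0
    have hcs := abs_real_inner_le_norm u v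
    rw [abs_le] at hcs
    have hD2 : ‖u - v‖^2 = ‖u‖^2 + ‖v‖^2 - 2 * ⟪u, v⟫ := by
      rw [norm_sub_sq_real]; ring
    have L := lower_scalar ha hb hcs.1 hcs.2 hD0 hD2
    have U := upper_scalar hR ha hu hb hv hcs.2 hD0 hD2
    constructor
    · calc ‖u - v‖ = _root_.arcosh (Real.cosh ‖u - v‖) := (_root_.arcosh_cosh hD0).symm
        _ ≤ _ := arcosh_le_arcosh (Real.one_le_cosh _) L
    · calc _root_.arcosh (Real.cosh ‖u‖ * Real.cosh ‖v‖ -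
            Real.sinh ‖u‖ / ‖u‖ * (Real.sinh ‖v‖ / ‖v‖) * ⟪u, v⟫)
          ≤ _root_.arcosh (Real.cosh ((Real.sinh R / R) * ‖u - v‖)) :=
            arcosh_le_arcosh (le_trans (Real.one_le_cosh _) L) U
        _ = (Real.sinh R / R) * ‖u - v‖ := _root_.arcosh_cosh (by positivity)
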